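/- Let Ω ⊆ ℂ be open and F : Ω → C{z} be such that the function (x,z) ↦ F(x)(z) is holomorphic in two variables on a neighbourhood of Ω × {0} (F is strongly analytic). Then F is analytic as a map into (C{z}, ||·||): for each x ∈ Ω there is a continuous linear map L : ℂ → C{z} with ||F(x+h) − F(x) − L(h)|| = o(|h|). -/

import Mathlib

def Conv (a : ℕ → ℂ) : Prop := ∃ C r : ℝ, 0 ≤ C ∧ 0 ≤ r ∧ ∀ j, ‖a j‖ ≤ C * r ^ j

noncomputable def snorm (a : ℕ → ℂ) : ℝ := ∑' j, ‖a j‖ / (Nat.factorial j : ℝ)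

set_option maxHeartbeats 1000000

open Metric Filter Complex
open scoped NNReal ENNReal

noncomputable def pd2 (G : ℂ × ℂ → ℂ) : ℕ → ℂ × ℂ → ℂ
  | 0 => G
  | (j+1) => fun p => fderiv ℂ (pd2 G j) p (0, 1)

lemma pd2_analytic {G : ℂ × ℂ → ℂ} {U : Set (ℂ × ℂ)} (hU : IsOpen U)
    (hG : AnalyticOnNhd ℂ G U) : ∀ j, AnalyticOnNhd ℂ (pd2 G j) U := by
  intro j
  induction j with
  | zero => exact hG
  | succ j ih =>
    intro p hp
    exact ((ContinuousLinearMap.apply ℂ ℂ ((0:ℂ),(1:ℂ))).analyticAt _).comp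
      ((ih.fderiv) p hp)

lemma pd2_eq {G : ℂ × ℂ → ℂ} {U : Set (ℂ × ℂ)} (hU : IsOpen U)
    (hG : AnalyticOnNhd ℂ G U) :
    ∀ j w z, (w, z) ∈ U → pd2 G j (w, z) = iteratedDeriv j (fun t => G (w, t)) z := by
  intro j
  induction j with
  | zero => intro w z _; simp [pd2, iteratedDeriv_zero]
  | succ j ih =>
    intro w z hwz
    have hdiff : DifferentiableAt ℂ (pd2 G j) (w, z) :=
      ((pd2_analytic hU hG j) _ hwz).differentiableAt
    have hline : HasDerivAt (fun t : ℂ => ((w, t) : ℂ × ℂ)) ((0:ℂ), (1:ℂ)) z :=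
      (hasDerivAt_const z w).prodMk (hasDerivAt_id z)
    have h1 : HasDerivAt (fun t => pd2 G j (w, t)) (fderiv ℂ (pd2 G j) (w, z) (0, 1)) z :=
      hdiff.hasFDerivAt.comp_hasDerivAt z hline
    have heq : (fun t => pd2 G j (w, t)) =ᶠ[nhds z] iteratedDeriv j (fun t => G (w, t)) := by
      have hopen : IsOpen {t : ℂ | (w, t) ∈ U} := hU.preimage (by fun_prop)
      filter_upwards [hopen.mem_nhds hwz] with t ht using ih w t ht
    calc pd2 G (j+1) (w, z) = fderiv ℂ (pd2 G j) (w, z) (0, 1) := rfl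
    _ = deriv (fun t => pd2 G j (w, t)) z := h1.deriv.symm
    _ = deriv (iteratedDeriv j (fun t => G (w, t))) z := heq.deriv_eq
    _ = iteratedDeriv (j+1) (fun t => G (w, t)) z := by rw [iteratedDeriv_succ]

lemma cauchy_coeff_bound {f : ℂ → ℂ} {c : ℂ} {R : ℝ≥0} {M : ℝ} (hR : 0 < (R:ℝ))
    (hc : ContinuousOn f (Metric.sphere c (R:ℝ)))
    (hM : ∀ z ∈ Metric.sphere c (R:ℝ), ‖f z‖ ≤ M) (n : ℕ) :
    ‖(cauchyPowerSeries f c R).coeff n‖ ≤ M * ((R:ℝ)⁻¹) ^ n := by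
  have hM0 : 0 ≤ M := le_trans (norm_nonneg _) (hM (c + R) (by simp [hR.le]))
  have h0 : ‖(cauchyPowerSeries f c R).coeff n‖ ≤ ‖cauchyPowerSeries f c R n‖ := by
    rw [FormalMultilinearSeries.coeff]
    refine le_trans ((cauchyPowerSeries f c R n).le_opNorm _) ?_
    simp
  refine h0.trans ((norm_cauchyPowerSeries_le f c R n).trans ?_)
  have hcont : Continuous fun θ : ℝ => ‖f (circleMap c R θ)‖ := by
    refine (hc.comp_continuous (continuous_circleMap c R) ?_).norm
    exact fun θ => circleMap_mem_sphere c hR.le θ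
  have hint : (∫ θ : ℝ in (0)..2 * Real.pi, ‖f (circleMap c R θ)‖) ≤ 2 * Real.pi * M := by
    have := intervalIntegral.integral_mono_on (a := (0:ℝ)) (b := 2 * Real.pi) (μ := MeasureTheory.volume)
      Real.two_pi_pos.le (hcont.intervalIntegrable _ _) (intervalIntegrable_const (c := M))
      (fun θ _ => hM _ (circleMap_mem_sphere c hR.le θ))
    simpa using this
  have habs : |(R:ℝ)| = (R:ℝ) := abs_of_pos hR
  rw [habs]
  have hpow : (0:ℝ) ≤ ((R:ℝ)⁻¹) ^ n := by positivity
  calc (2 * Real.pi)⁻¹ * (∫ θ : ℝ in (0)..2 * Real.pi, ‖f (circleMap c R θ)‖) * ((R:ℝ)⁻¹) ^ n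
      ≤ (2 * Real.pi)⁻¹ * (2 * Real.pi * M) * ((R:ℝ)⁻¹) ^ n := by
        apply mul_le_mul_of_nonneg_right _ hpow
        exact mul_le_mul_of_nonneg_left hint (by positivity)
    _ = M * ((R:ℝ)⁻¹) ^ n := by
        field_simp


/-- If `F : Ω → C{z}` is strongly analytic — the map `(x,z) ↦ F(x)(z)` is holomorphic
in two variables on a neighbourhood `U` of `Ω × {0}` — then `F` is analytic as a map
into `(C{z}, ‖·‖)`: at each `x ∈ Ω` it admits a continuous linear map `L : ℂ → C{z}`
with `‖F(x+h) − F(x) − L(h)‖ = o(|h|)`. -/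
theorem strongly_analytic_implies_analytic
    (Ω : Set ℂ) (hΩ : IsOpen Ω)
    (F : ℂ → ℕ → ℂ) (hconv : ∀ x ∈ Ω, Conv (F x))
    (U : Set (ℂ × ℂ)) (hU : IsOpen U) (hΩU : ∀ x ∈ Ω, (x, (0 : ℂ)) ∈ U)
    (G : ℂ × ℂ → ℂ) (hG : AnalyticOnNhd ℂ G U)
    (hFG : ∀ x z : ℂ, (x, z) ∈ U → HasSum (fun j => F x j * z ^ j) (G (x, z))) :
    ∀ x ∈ Ω, ∃ L : ℂ → ℕ → ℂ,
      IsLinearMap ℂ L ∧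
      (∃ K : ℝ, ∀ h : ℂ, snorm (L h) ≤ K * ‖h‖) ∧
      Filter.Tendsto
        (fun h : ℂ => snorm (fun j => F (x + h) j - F x j - L h j) / ‖h‖)
        (nhdsWithin 0 {0}ᶜ) (nhds 0) := by
  intro x hx
  -- choose a radius ε
  obtain ⟨ε₁, hε₁pos, hε₁⟩ := Metric.nhds_basis_closedBall.mem_iff.1 (hΩ.mem_nhds hx)
  obtain ⟨ε₂, hε₂pos, hε₂⟩ := Metric.nhds_basis_closedBall.mem_iff.1 (hU.mem_nhds (hΩU x hx))
  set ε : ℝ := min ε₁ ε₂ with hεdef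
  have hεpos : 0 < ε := lt_min hε₁pos hε₂pos
  have hεΩ : Metric.closedBall x ε ⊆ Ω :=
    (Metric.closedBall_subset_closedBall (min_le_left _ _)).trans hε₁
  have hεU : ∀ w z : ℂ, w ∈ Metric.closedBall x ε → z ∈ Metric.closedBall (0:ℂ) ε →
      (w, z) ∈ U := by
    intro w z hw hz
    apply hε₂
    rw [Metric.mem_closedBall] at *
    rw [Prod.dist_eq]
    exact max_le (hw.trans (min_le_right _ _)) (hz.trans (min_le_right _ _))
  set εnn : ℝ≥0 := ⟨ε, hεpos.le⟩ with hεnn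
  have hεnnpos : (0:ℝ≥0) < εnn := hεpos
  -- bound on G
  obtain ⟨M, hM⟩ : ∃ M, ∀ p ∈ (Metric.closedBall x ε ×ˢ Metric.closedBall (0:ℂ) ε),
      ‖G p‖ ≤ M := by
    have hK : IsCompact (Metric.closedBall x ε ×ˢ Metric.closedBall (0:ℂ) ε) :=
      (isCompact_closedBall _ _).prod (isCompact_closedBall _ _)
    exact hK.exists_bound_of_continuousOn
      ((hG.continuousOn).mono fun p hp => hεU _ _ hp.1 hp.2)
  have hM0 : 0 ≤ M := le_trans (norm_nonneg _)
    (hM (x, 0) ⟨mem_closedBall_self hεpos.le, mem_closedBall_self hεpos.le⟩)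
  set g : ℂ → ℂ → ℂ := fun w z => G (w, z) with hg
  -- the z-slices are differentiable on the closed ball
  have hgdiff : ∀ w ∈ Metric.closedBall x ε,
      DifferentiableOn ℂ (g w) (Metric.closedBall (0:ℂ) ε) := by
    intro w hw z hz
    exact (((hG _ (hεU w z hw hz)).curry_right).differentiableAt).differentiableWithinAt
  have hq : ∀ w ∈ Metric.closedBall x ε,
      HasFPowerSeriesOnBall (g w) (cauchyPowerSeries (g w) 0 εnn) 0 εnn := by
    intro w hw
    exact (hgdiff w hw).hasFPowerSeriesOnBall hεnnpos
  -- F w j is the j-th Cauchy coefficient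
  have key : ∀ w ∈ Metric.closedBall x ε, ∀ j,
      F w j = (cauchyPowerSeries (g w) 0 εnn).coeff j := by
    intro w hw j
    obtain ⟨C, r, hC, hr, hb⟩ := hconv w (hεΩ hw)
    have htpos : (0:ℝ) < (r+1)⁻¹ := by positivity
    set t : ℝ≥0 := ⟨(r+1)⁻¹, htpos.le⟩ with ht
    have hrad : (t : ℝ≥0∞) ≤ (FormalMultilinearSeries.ofScalars ℂ (F w)).radius := by
      apply FormalMultilinearSeries.le_radius_of_bound _ C
      intro n
      rw [FormalMultilinearSeries.ofScalars_norm]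
      calc ‖F w n‖ * (t:ℝ)^n ≤ (C * r^n) * ((r+1)⁻¹)^n :=
            mul_le_mul_of_nonneg_right (hb n) (by positivity)
        _ = C * (r * (r+1)⁻¹)^n := by rw [mul_pow]; ring
        _ ≤ C * 1^n := by
            apply mul_le_mul_of_nonneg_left _ hC
            apply pow_le_pow_left₀ (by positivity)
            rw [← div_eq_mul_inv, div_le_one (by positivity)]
            linarith
        _ = C := by ring
    set δ : ℝ≥0 := min t εnn with hδ
    have hδpos : (0:ℝ≥0) < δ := lt_min htpos hεnnpos
    have hpa : HasFPowerSeriesOnBall (g w) (FormalMultilinearSeries.ofScalars ℂ (F w)) 0 δ := by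
      refine ⟨le_trans ?_ hrad, by exact_mod_cast hδpos, ?_⟩
      · exact_mod_cast (by exact_mod_cast min_le_left t εnn : (δ:ℝ≥0) ≤ t)
      · intro y hy
        have hy' : ‖y‖ < ε := by
          rw [mem_emetric_ball_zero_iff] at hy
          have h1 : (‖y‖₊ : ℝ≥0∞) < (εnn : ℝ≥0∞) :=
            lt_of_lt_of_le hy (by exact_mod_cast min_le_right t εnn)
          exact_mod_cast h1
        have hyU : (w, y) ∈ U := hεU w y hw (by simpa [mem_closedBall_zero_iff] using hy'.le)
        have hsum := hFG w y hyU
        have h2 : (fun n => FormalMultilinearSeries.ofScalars ℂ (F w) n fun _ => y)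
            = fun n => F w n * y ^ n := by
          funext n
          rw [FormalMultilinearSeries.ofScalars_apply_eq, smul_eq_mul]
        rw [h2, zero_add]
        exact hsum
    have heqser : FormalMultilinearSeries.ofScalars ℂ (F w) = cauchyPowerSeries (g w) 0 εnn :=
      hpa.hasFPowerSeriesAt.eq_formalMultilinearSeries (hq w hw).hasFPowerSeriesAt
    rw [← heqser]
    have : FormalMultilinearSeries.ofScalars ℂ (F w) j (fun _ => 1) = F w j := by
      rw [FormalMultilinearSeries.ofScalars_apply_eq]; simp
    rw [FormalMultilinearSeries.coeff, show (1 : Fin j → ℂ) = fun _ => 1 from rfl, this]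
  -- uniform bound on the coefficients F w j
  have hFbound : ∀ w ∈ Metric.closedBall x ε, ∀ j, ‖F w j‖ ≤ M * (ε⁻¹) ^ j := by
    intro w hw j
    rw [key w hw j]
    refine cauchy_coeff_bound (R := εnn) (show (0:ℝ) < (εnn:ℝ) from hεpos) ?_ ?_ j
    · refine (hG.continuousOn.comp (Continuous.continuousOn (by fun_prop)) ?_)
      exact fun z hz => hεU w z hw (sphere_subset_closedBall hz)
    · exact fun z hz => hM (w, z) ⟨hw, sphere_subset_closedBall hz⟩
  -- the coefficient functions are analytic in w
  set φ : ℕ → ℂ → ℂ := fun j w => ((j.factorial : ℂ))⁻¹ * pd2 G j (w, 0) with hφ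
  have hφF : ∀ w ∈ Metric.closedBall x ε, ∀ j, φ j w = F w j := by
    intro w hw j
    have h2 := (hq w hw).factorial_smul (1:ℂ) j
    rw [← iteratedDeriv_eq_iteratedFDeriv] at h2
    have h3 : pd2 G j (w, 0) = iteratedDeriv j (fun t => G (w, t)) 0 :=
      pd2_eq hU hG j w 0 (hεU w 0 hw (mem_closedBall_self hεpos.le))
    have h4 : (cauchyPowerSeries (g w) 0 εnn) j (fun _ => (1:ℂ))
        = (cauchyPowerSeries (g w) 0 εnn).coeff j := by
      rw [FormalMultilinearSeries.coeff, show (1 : Fin j → ℂ) = fun _ => 1 from rfl]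
    rw [h4] at h2
    have h5 : (j.factorial : ℂ) * (cauchyPowerSeries (g w) 0 εnn).coeff j
        = pd2 G j (w, 0) := by
      rw [h3, ← h2, nsmul_eq_mul]
    show ((j.factorial : ℂ))⁻¹ * pd2 G j (w, 0) = F w j
    rw [key w hw j, ← h5, ← mul_assoc,
      inv_mul_cancel₀ (by exact_mod_cast j.factorial_ne_zero), one_mul]
  have hφana : ∀ j, DifferentiableOn ℂ (φ j) (Metric.closedBall x ε) := by
    intro j w hw
    have h1 : AnalyticAt ℂ (fun u : ℂ => pd2 G j (u, 0)) w := by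
      have := (pd2_analytic hU hG j) (w, 0) (hεU w 0 hw (mem_closedBall_self hεpos.le))
      exact this.curry_left
    exact ((analyticAt_const.mul h1).differentiableAt).differentiableWithinAt
  set Q : ℕ → FormalMultilinearSeries ℂ ℂ ℂ := fun j => cauchyPowerSeries (φ j) x εnn with hQdef
  have hQ : ∀ j, HasFPowerSeriesOnBall (φ j) (Q j) x εnn :=
    fun j => (hφana j).hasFPowerSeriesOnBall hεnnpos
  have hcjk : ∀ j k, ‖(Q j).coeff k‖ ≤ (M * ε⁻¹ ^ j) * ε⁻¹ ^ k := by
    intro j k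
    refine cauchy_coeff_bound (R := εnn) (show (0:ℝ) < (εnn:ℝ) from hεpos) ?_ ?_ k
    · exact ((hφana j).continuousOn).mono sphere_subset_closedBall
    · intro w hw
      rw [hφF w (sphere_subset_closedBall hw) j]
      exact hFbound w (sphere_subset_closedBall hw) j
  clear_value φ Q
  refine ⟨fun h j => (Q j).coeff 1 * h, ⟨?_, ?_⟩, ⟨?_, ?_⟩, ?_⟩
  · intro a b; funext j; simp only [Pi.add_apply]; ring
  · intro s a; funext j; simp only [Pi.smul_apply, smul_eq_mul]; ring
  · exact ∑' j, ‖(Q j).coeff 1‖ / (j.factorial : ℝ)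
  · intro h
    refine le_of_eq ?_
    simp only [snorm]
    rw [show (fun j => ‖(Q j).coeff 1 * h‖ / (j.factorial : ℝ))
        = fun j => (‖(Q j).coeff 1‖ / (j.factorial : ℝ)) * ‖h‖ by
      funext j; rw [norm_mul]; ring]
    exact tsum_mul_right
  · -- the main estimate
    have hεhalf : ε/2 < ε := by linarith
    have hrem : ∀ h : ℂ, ‖h‖ ≤ ε/2 → ∀ j,
        ‖F (x+h) j - F x j - (Q j).coeff 1 * h‖ ≤ M * ε⁻¹^j * (2*ε⁻¹^2) * ‖h‖^2 := by
      intro h hh j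
      have hhε : ‖h‖ < ε := lt_of_le_of_lt hh hεhalf
      have hball : x + h ∈ Metric.closedBall x ε := by
        rw [Metric.mem_closedBall, dist_eq_norm, add_sub_cancel_left]
        exact hhε.le
      have hmem : h ∈ Metric.eball (0:ℂ) (εnn : ℝ≥0∞) := by
        rw [mem_emetric_ball_zero_iff]
        exact_mod_cast hhε
      have hs : HasSum (fun k => (Q j).coeff k * h ^ k) (F (x+h) j) := by
        have h1 := (hQ j).hasSum hmem
        rw [hφF _ hball j] at h1
        have h3 : (fun k => (Q j) k fun _ => h) = fun k => (Q j).coeff k * h ^ k := by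
          funext k
          rw [FormalMultilinearSeries.apply_eq_pow_smul_coeff, smul_eq_mul]; ring
        rwa [h3] at h1
      have htail : HasSum (fun k => (Q j).coeff (k+2) * h ^ (k+2))
          (F (x+h) j - ∑ i ∈ Finset.range 2, (Q j).coeff i * h ^ i) :=
        (hasSum_nat_add_iff' 2).2 hs
      have hc0 : (Q j).coeff 0 = F x j := by
        have h1 : (Q j) 0 (fun _ => (1:ℂ)) = φ j x := (hQ j).coeff_zero _
        have h2 : (Q j).coeff 0 = (Q j) 0 (fun _ => 1) := by
          rw [FormalMultilinearSeries.coeff, show (1 : Fin 0 → ℂ) = fun _ => 1 from rfl]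
        rw [h2, h1, hφF x (mem_closedBall_self hεpos.le) j]
      have hsum2 : ∑ i ∈ Finset.range 2, (Q j).coeff i * h ^ i
          = F x j + (Q j).coeff 1 * h := by
        rw [Finset.sum_range_succ, Finset.sum_range_one, hc0]
        ring
      have hR : F (x+h) j - F x j - (Q j).coeff 1 * h
          = ∑' k, (Q j).coeff (k+2) * h^(k+2) := by
        rw [htail.tsum_eq, hsum2]; ring
      rw [hR]
      set q : ℝ := ε⁻¹ * ‖h‖ with hqdef
      have hq0 : 0 ≤ q := by positivity
      have hq2 : q ≤ 1/2 := by
        rw [hqdef]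
        calc ε⁻¹ * ‖h‖ ≤ ε⁻¹ * (ε/2) := by
              exact mul_le_mul_of_nonneg_left hh (by positivity)
          _ = 1/2 := by field_simp
      have hq1 : q < 1 := lt_of_le_of_lt hq2 (by norm_num)
      have hA0 : 0 ≤ M * ε⁻¹^j * ε⁻¹^2 * ‖h‖^2 :=
        mul_nonneg (mul_nonneg (mul_nonneg hM0 (by positivity)) (by positivity)) (by positivity)
      have hgeo : HasSum (fun k : ℕ => (M * ε⁻¹^j * ε⁻¹^2 * ‖h‖^2) * q^k)
          ((M * ε⁻¹^j * ε⁻¹^2 * ‖h‖^2) * (1-q)⁻¹) :=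
        (hasSum_geometric_of_lt_one hq0 hq1).mul_left _
      have hbd : ∀ k, ‖(Q j).coeff (k+2) * h^(k+2)‖
          ≤ (M * ε⁻¹^j * ε⁻¹^2 * ‖h‖^2) * q^k := by
        intro k
        rw [norm_mul, norm_pow]
        calc ‖(Q j).coeff (k+2)‖ * ‖h‖^(k+2)
            ≤ ((M * ε⁻¹^j) * ε⁻¹^(k+2)) * ‖h‖^(k+2) :=
              mul_le_mul_of_nonneg_right (hcjk j (k+2)) (by positivity)
          _ = (M * ε⁻¹^j * ε⁻¹^2 * ‖h‖^2) * q^k := by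
              rw [hqdef, mul_pow]; ring
      refine (tsum_of_norm_bounded hgeo hbd).trans ?_
      have hinv : (1-q)⁻¹ ≤ 2 := by
        have h12 : (2:ℝ)⁻¹ ≤ 1 - q := by linarith
        have := inv_anti₀ (by norm_num : (0:ℝ) < 2⁻¹) h12
        rwa [inv_inv] at this
      calc (M * ε⁻¹^j * ε⁻¹^2 * ‖h‖^2) * (1-q)⁻¹
          ≤ (M * ε⁻¹^j * ε⁻¹^2 * ‖h‖^2) * 2 := mul_le_mul_of_nonneg_left hinv hA0
        _ = M * ε⁻¹^j * (2*ε⁻¹^2) * ‖h‖^2 := by ring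
    have hE0 : Summable (fun j : ℕ => ε⁻¹^j / (j.factorial : ℝ)) :=
      Real.summable_pow_div_factorial ε⁻¹
    set C0 : ℝ := M * (2*ε⁻¹^2) * ∑' j, ε⁻¹^j / (j.factorial : ℝ) with hC0
    have hsnorm : ∀ h : ℂ, ‖h‖ ≤ ε/2 →
        snorm (fun j => F (x+h) j - F x j - (Q j).coeff 1 * h) ≤ C0 * ‖h‖^2 := by
      intro h hh
      have hterm : ∀ j : ℕ, ‖F (x+h) j - F x j - (Q j).coeff 1 * h‖ / (j.factorial:ℝ)
          ≤ (M * (2*ε⁻¹^2) * ‖h‖^2) * (ε⁻¹^j / (j.factorial:ℝ)) := by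
        intro j
        calc ‖F (x+h) j - F x j - (Q j).coeff 1 * h‖ / (j.factorial:ℝ)
            ≤ (M * ε⁻¹^j * (2*ε⁻¹^2) * ‖h‖^2) / (j.factorial:ℝ) := by
              gcongr
              exact hrem h hh j
          _ = (M * (2*ε⁻¹^2) * ‖h‖^2) * (ε⁻¹^j / (j.factorial:ℝ)) := by ring
      have hsumm2 : Summable (fun j : ℕ => (M * (2*ε⁻¹^2) * ‖h‖^2) * (ε⁻¹^j / (j.factorial:ℝ))) :=
        hE0.mul_left _
      have hsumm1 : Summable (fun j : ℕ =>
          ‖F (x+h) j - F x j - (Q j).coeff 1 * h‖ / (j.factorial:ℝ)) :=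
        Summable.of_nonneg_of_le (fun j => by positivity) hterm hsumm2
      have t1 : (∑' j, ‖F (x+h) j - F x j - (Q j).coeff 1 * h‖ / (j.factorial:ℝ))
          ≤ ∑' j, (M * (2*ε⁻¹^2) * ‖h‖^2) * (ε⁻¹^j / (j.factorial:ℝ)) :=
        Summable.tsum_le_tsum hterm hsumm1 hsumm2
      have t2 : (∑' j, (M * (2*ε⁻¹^2) * ‖h‖^2) * (ε⁻¹^j / (j.factorial:ℝ)))
          = (M * (2*ε⁻¹^2) * ‖h‖^2) * ∑' j, ε⁻¹^j / (j.factorial:ℝ) :=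
        tsum_mul_left (a := M * (2*ε⁻¹^2) * ‖h‖^2) (f := fun j => ε⁻¹^j / (j.factorial:ℝ))
      show (∑' j, ‖F (x+h) j - F x j - (Q j).coeff 1 * h‖ / (j.factorial:ℝ)) ≤ C0 * ‖h‖^2
      rw [hC0]
      refine t1.trans (le_of_eq ?_)
      rw [t2]
      ring
    refine squeeze_zero' (g := fun h : ℂ => C0 * ‖h‖) ?_ ?_ ?_
    · refine Filter.Eventually.of_forall fun h => div_nonneg ?_ (norm_nonneg _)
      exact tsum_nonneg fun j => div_nonneg (norm_nonneg _) (by positivity)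
    · have h1 : ∀ᶠ h : ℂ in nhds 0, ‖h‖ ≤ ε/2 := by
        filter_upwards [Metric.closedBall_mem_nhds (0:ℂ) (half_pos hεpos)] with h hh
        simpa [mem_closedBall_zero_iff] using hh
      filter_upwards [h1.filter_mono nhdsWithin_le_nhds, self_mem_nhdsWithin] with h hh hne
      have hpos : 0 < ‖h‖ := norm_pos_iff.2 (by simpa using hne)
      rw [div_le_iff₀ hpos]
      calc snorm (fun j => F (x+h) j - F x j - (Q j).coeff 1 * h) ≤ C0 * ‖h‖^2 := hsnorm h hh
        _ = C0 * ‖h‖ * ‖h‖ := by ring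
    · have hT : Filter.Tendsto (fun h : ℂ => C0 * ‖h‖) (nhds 0) (nhds (C0 * ‖(0:ℂ)‖)) :=
        (continuous_const.mul continuous_norm).tendsto 0
      simpa using hT.mono_left nhdsWithin_le_nhds
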